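/- arXiv:2509.20332 — 2 statements merged into one kernel-verified Lean document; each statement's English description precedes it below -/
import Mathlib

section
/- Let X, Y be disjoint sets of distinct reals with N = |X| + |Y| even, x ∈ X, X' = X \ {x}, and x* a real distinct from all values in X' ∪ Y, X* = {x*} ∪ X'. If |rank(x*, X*∪Y) - (N+1)/2| = |rank(x, X∪Y) - (N+1)/2| = 1/2, then T(X,Y) = T(X*,Y), where T is the Ansari-Bradley statistic. -/
/-!
Put `U = X' ∪ Y`, so that `X ∪ Y = U ∪ {x}` and `X* ∪ Y = U ∪ {x*}`, and write `N = 2k`.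
For `a ∈ X'` the two ranks of `a` differ only when `a` lies strictly between `x` and `x*`.
Both `x` and `x*` have rank `k` or `k + 1`, so such an `a` has `k` elements of `U` at or below
it, and its two ranks are `k` and `k + 1`, which lie at the same distance `1/2` from `(N + 1)/2`.
The contributions of `x` and `x*` themselves are both `1/2` by hypothesis.
-/

open Finset

/-- rank of `x` in `Z`: number of elements of `Z` less than or equal to `x`. -/
noncomputable def rk (x : ℝ) (Z : Finset ℝ) : ℕ := (Z.filter (fun z => z ≤ x)).card

/-- Ansari-Bradley test statistic. -/
noncomputable def ABT (A B : Finset ℝ) : ℝ :=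
  ∑ a ∈ A, |(rk a (A ∪ B) : ℝ) - (((A ∪ B).card : ℝ) + 1) / 2|

lemma rk_insert_of_notMem {a t : ℝ} {Z : Finset ℝ} (ht : t ∉ Z) :
    rk a (insert t Z) = rk a Z + if t ≤ a then 1 else 0 := by
  unfold rk
  rw [filter_insert]
  split_ifs
  · exact card_insert_of_notMem fun h => ht (mem_filter.1 h).1
  · rfl

lemma rk_lt_rk {u v : ℝ} {Z : Finset ℝ} (hv : v ∈ Z) (huv : u < v) : rk u Z < rk v Z := by
  have hsub : Z.filter (· ≤ u) ⊆ Z.filter (· ≤ v) :=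
    monotone_filter_right Z fun _ _ hz => le_trans hz huv.le
  refine card_lt_card ((ssubset_iff_of_subset hsub).2 ⟨v, ?_, ?_⟩)
  · exact mem_filter.2 ⟨hv, le_rfl⟩
  · exact fun h => (mem_filter.1 h).2.not_gt huv

lemma abs_sub_half_eq_half_iff (r k : ℕ) :
    |(r : ℝ) - (((k + k : ℕ) : ℝ) + 1) / 2| = 1 / 2 ↔ r = k ∨ r = k + 1 := by
  rw [abs_eq (by norm_num)]
  push_cast
  constructor
  · rintro (h | h)
    · exact Or.inr (by exact_mod_cast (by linarith : (r : ℝ) = k + 1))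
    · exact Or.inl (by exact_mod_cast (by linarith : (r : ℝ) = k))
  · rintro (rfl | rfl)
    · right; ring
    · left; push_cast; ring

lemma rk_eq_of_lt_of_lt {U : Finset ℝ} {t s a : ℝ} {k : ℕ} (ht : t ∉ U) (hs : s ∉ U)
    (ha : a ∈ U) (hta : t < a) (has : a < s) (hkt : k ≤ rk t (insert t U))
    (hks : rk s (insert s U) ≤ k + 1) : rk a U = k := by
  have hlt_t := rk_lt_rk (mem_insert_of_mem (s := U) (b := t) ha) hta
  have hlt_s := rk_lt_rk (mem_insert_self s U) has
  rw [rk_insert_of_notMem ht (a := a), if_pos hta.le] at hlt_t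
  rw [rk_insert_of_notMem hs (a := a), if_neg has.not_ge] at hlt_s
  omega

lemma abs_rk_insert_sub_eq_of_median {U : Finset ℝ} {t s a : ℝ} {n : ℕ} (hn : Even n)
    (ht : t ∉ U) (hs : s ∉ U) (ha : a ∈ U)
    (hmt : |(rk t (insert t U) : ℝ) - ((n : ℝ) + 1) / 2| = 1 / 2)
    (hms : |(rk s (insert s U) : ℝ) - ((n : ℝ) + 1) / 2| = 1 / 2) :
    |(rk a (insert t U) : ℝ) - ((n : ℝ) + 1) / 2|
      = |(rk a (insert s U) : ℝ) - ((n : ℝ) + 1) / 2| := by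
  obtain ⟨k, rfl⟩ := hn
  rw [abs_sub_half_eq_half_iff] at hmt hms
  have hat : a ≠ t := ne_of_mem_of_not_mem ha ht
  have has : a ≠ s := ne_of_mem_of_not_mem ha hs
  have median_k : |((k + 0 : ℕ) : ℝ) - (((k + k : ℕ) : ℝ) + 1) / 2| = 1 / 2 :=
    (abs_sub_half_eq_half_iff _ k).2 (Or.inl rfl)
  have median_k_succ : |((k + 1 : ℕ) : ℝ) - (((k + k : ℕ) : ℝ) + 1) / 2| = 1 / 2 :=
    (abs_sub_half_eq_half_iff _ k).2 (Or.inr rfl)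
  rw [rk_insert_of_notMem ht, rk_insert_of_notMem hs]
  by_cases hta : t ≤ a <;> by_cases hsa : s ≤ a
  · simp only [if_pos hta, if_pos hsa]
  · have hrk : rk a U = k := rk_eq_of_lt_of_lt ht hs ha (hta.lt_of_ne hat.symm)
      (not_le.1 hsa) (by omega) (by omega)
    rw [if_pos hta, if_neg hsa, hrk, median_k, median_k_succ]
  · have hrk : rk a U = k := rk_eq_of_lt_of_lt hs ht ha (hsa.lt_of_ne has.symm)
      (not_le.1 hta) (by omega) (by omega)
    rw [if_neg hta, if_pos hsa, hrk, median_k, median_k_succ]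
  · simp only [if_neg hta, if_neg hsa]

lemma ABT_insert {A B : Finset ℝ} {t : ℝ} {n : ℕ} (ht : t ∉ A ∪ B)
    (hn : (A ∪ B).card + 1 = n) :
    ABT (insert t A) B = |(rk t (insert t (A ∪ B)) : ℝ) - ((n : ℝ) + 1) / 2|
      + ∑ a ∈ A, |(rk a (insert t (A ∪ B)) : ℝ) - ((n : ℝ) + 1) / 2| := by
  have htA : t ∉ A := fun h => ht (mem_union_left B h)
  rw [ABT, insert_union, sum_insert htA, card_insert_of_notMem ht, hn]

theorem stmt5 (X Y : Finset ℝ) (x xs : ℝ) (hd : Disjoint X Y) (hx : x ∈ X)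
    (X' Xs : Finset ℝ) (hX' : X' = X.erase x) (hxs : xs ∉ X' ∪ Y)
    (hXs : Xs = insert xs X') (N : ℕ) (hN : N = X.card + Y.card)
    (hNeven : Even N)
    (habs1 : |(rk xs (Xs ∪ Y) : ℝ) - ((N : ℝ) + 1) / 2| = 1 / 2)
    (habs2 : |(rk x (X ∪ Y) : ℝ) - ((N : ℝ) + 1) / 2| = 1 / 2) :
    ABT X Y = ABT Xs Y := by
  have hX : X = insert x X' := by rw [hX', insert_erase hx]
  have hxU : x ∉ X' ∪ Y := by simp [hX', disjoint_left.1 hd hx]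
  have hn : (X' ∪ Y).card + 1 = N := by
    rw [hN, ← card_union_of_disjoint hd, hX, insert_union, card_insert_of_notMem hxU]
  rw [hX, insert_union] at habs2
  rw [hXs, insert_union] at habs1
  rw [hX, hXs, ABT_insert hxU hn, ABT_insert hxs hn, habs1, habs2]
  congr 1
  exact sum_congr rfl fun a ha =>
    abs_rk_insert_sub_eq_of_median hNeven hxU hxs (mem_union_left Y ha) habs2 habs1
end

section
/- Let X = {x₁,…,xₙ} and Y' = {y₁,…,y_{m'}} be disjoint sets of distinct reals, and let Ŷ be a set of m - m' distinct reals with exactly k of them strictly greater than max(X ∪ Y') and the remaining m - m' - k strictly less than min(X ∪ Y'). Set Y* = Ŷ ∪ Y', N' = (n + m' + 1)/2, M' = (m - m')/2. Then T(X, Y*) = T(X, Y') + f(k), where f(k) = (k - M')·∑ᵢ(Aᵢ - Cᵢ) + sgn(k - M')·∑ᵢ Bᵢ·(2N' + k - M' - 2·rank(xᵢ, X ∪ Y')), with Aᵢ = 1[rank(xᵢ, X∪Y') < N' + min(0, k-M')], Bᵢ = 1[N' + min(0,k-M') ≤ rank(xᵢ, X∪Y') ≤ N' + max(0,k-M')],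 Cᵢ = 1[rank(xᵢ, X∪Y') > N' + max(0,k-M')], and sgn(t) = 1 if t ≥ 0, -1 otherwise. -/
open Finset

/-- The function from Definition of func in the paper. -/
noncomputable def ABfunc (X Y' : Finset ℝ) (m k : ℕ) : ℝ :=
  let n : ℕ := X.card
  let m' : ℕ := Y'.card
  let N' : ℝ := ((n : ℝ) + (m' : ℝ) + 1) / 2
  let M' : ℝ := ((m : ℝ) - (m' : ℝ)) / 2
  let a : ℝ := min 0 ((k : ℝ) - M')
  let b : ℝ := max 0 ((k : ℝ) - M')
  ((k : ℝ) - M') *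
      ∑ x ∈ X, ((if (rk x (X ∪ Y') : ℝ) < N' + a then (1 : ℝ) else 0) -
        (if N' + b < (rk x (X ∪ Y') : ℝ) then (1 : ℝ) else 0)) +
    (if (0 : ℝ) ≤ (k : ℝ) - M' then (1 : ℝ) else -1) *
      ∑ x ∈ X, (if N' + a ≤ (rk x (X ∪ Y') : ℝ) ∧ (rk x (X ∪ Y') : ℝ) ≤ N' + b then
        2 * N' + (k : ℝ) - M' - 2 * (rk x (X ∪ Y') : ℝ) else 0)

/-! Every point of `Yh` lies below or above all of `X ∪ Y'`, so adding `Yh` raises the rank of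
each `x ∈ X` by the number `m - m' - k` of points below, while the centre `(n + m + 1) / 2` of the
enlarged sample moves by `(m - m') / 2`. Hence each summand `|r - N'|` of `T(X, Y')` becomes
`|r - N' - d|` with `d = k - M'`, and `f(k)` collects the differences, which are piecewise linear
in `r` with breakpoints `N' + min 0 d` and `N' + max 0 d`. -/

noncomputable def absShiftCorrection (c d r : ℝ) : ℝ :=
  d * ((if r < c + min 0 d then 1 else 0) - (if c + max 0 d < r then 1 else 0)) +
    (if 0 ≤ d then 1 else -1) *
      (if c + min 0 d ≤ r ∧ r ≤ c + max 0 d then 2 * c + d - 2 * r else 0)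

lemma abs_sub_sub_eq_add_absShiftCorrection (c d r : ℝ) :
    |r - c - d| = |r - c| + absShiftCorrection c d r := by
  unfold absShiftCorrection
  rcases le_total 0 d with hd | hd
  · rw [min_eq_left hd, max_eq_right hd, if_pos hd]
    split_ifs <;> cases abs_cases (r - c - d) <;> cases abs_cases (r - c) <;> grind
  · rw [min_eq_right hd, max_eq_left hd]
    split_ifs <;> cases abs_cases (r - c - d) <;> cases abs_cases (r - c) <;> grind

lemma ABfunc_eq_sum (X Y' : Finset ℝ) (m k : ℕ) :
    ABfunc X Y' m k = ∑ x ∈ X, absShiftCorrection ((#X + #Y' + 1) / 2) (k - (m - #Y') / 2)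
      (rk x (X ∪ Y')) := by
  simp only [ABfunc, absShiftCorrection, mul_sum, ← sum_add_distrib, add_sub_assoc]

lemma rk_union_of_disjoint (x : ℝ) {S T : Finset ℝ} (h : Disjoint S T) :
    rk x (S ∪ T) = rk x S + rk x T := by
  rw [rk, filter_union, card_union_of_disjoint (disjoint_filter_filter h)]; rfl

lemma rk_add_card_filter_above {x : ℝ} {S T : Finset ℝ} (hx : x ∈ S)
    (hsplit : ∀ z ∈ T, (∀ w ∈ S, z < w) ∨ (∀ w ∈ S, w < z)) :
    rk x T + #(T.filter fun z => ∀ w ∈ S, w < z) = #T := by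
  have hbelow : T.filter (· ≤ x) = T.filter fun z => ¬ ∀ w ∈ S, w < z :=
    filter_congr fun z hz => ⟨fun hzx ha => (hzx.trans_lt (ha x hx)).false,
      fun hna => ((hsplit z hz).resolve_right hna x hx).le⟩
  rw [rk, hbelow, add_comm]
  exact card_filter_add_card_filter_not _

theorem stmt18_general (X Y' Yh : Finset ℝ) (m m' k : ℕ)
    (hd : Disjoint X Y') (hm' : Y'.card = m') (hmm : m' ≤ m)
    (hYh : Yh.card = m - m')
    (hsplit : ∀ z ∈ Yh, (∀ w ∈ X ∪ Y', z < w) ∨ (∀ w ∈ X ∪ Y', w < z))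
    (hkcount : (Yh.filter (fun z => ∀ w ∈ X ∪ Y', w < z)).card = k) :
    ABT X (Yh ∪ Y') = ABT X Y' + ABfunc X Y' m k := by
  subst hm'
  have hsep : Disjoint Yh (X ∪ Y') := disjoint_left.2 fun z hz hz' => by
    rcases hsplit z hz with h | h <;> exact lt_irrefl z (h z hz')
  have hYhR : (#Yh : ℝ) = m - #Y' := by rw [hYh, Nat.cast_sub hmm]
  have hcard : #(X ∪ (Yh ∪ Y')) = #Yh + (#X + #Y') := by
    rw [union_left_comm, card_union_of_disjoint hsep, card_union_of_disjoint hd]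
  have hrk : ∀ x ∈ X, rk x (X ∪ (Yh ∪ Y')) + k = rk x (X ∪ Y') + #Yh := fun x hx => by
    have := rk_add_card_filter_above (mem_union_left Y' hx) hsplit
    rw [union_left_comm, rk_union_of_disjoint x hsep]
    omega
  rw [ABT, ABT, ABfunc_eq_sum, ← sum_add_distrib]
  refine sum_congr rfl fun x hx => ?_
  rw [card_union_of_disjoint hd, Nat.cast_add, ← abs_sub_sub_eq_add_absShiftCorrection, hcard]
  have hrkx : (rk x (X ∪ (Yh ∪ Y')) : ℝ) + k = rk x (X ∪ Y') + #Yh := by exact_mod_cast hrk x hx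
  congr 1
  push_cast [hYhR] at hrkx ⊢
  linarith

theorem stmt18 (X Y' Yh : Finset ℝ) (m m' k : ℕ)
    (hd : Disjoint X Y') (hm' : Y'.card = m') (hmm : m' ≤ m)
    (hYh : Yh.card = m - m') (hk : k ≤ m - m')
    (hsplit : ∀ z ∈ Yh, (∀ w ∈ X ∪ Y', z < w) ∨ (∀ w ∈ X ∪ Y', w < z))
    (hkcount : (Yh.filter (fun z => ∀ w ∈ X ∪ Y', w < z)).card = k) :
    ABT X (Yh ∪ Y') = ABT X Y' + ABfunc X Y' m k :=
  stmt18_general X Y' Yh m m' k hd hm' hmm hYh hsplit hkcount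
end
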